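/- In Nim on graphs played on the complete graph K_n (n > 1) with every edge of weight 1, the first player has a winning strategy from any starting vertex. -/

import Mathlib

/-- A position of Nim on graphs: a symmetric non-negative integer weight
function on pairs of vertices (the weighted graph; weight-zero pairs are
non-edges) plus the location of the indicator piece. -/
structure NimPos (V : Type) where
  w : V → V → ℕ
  symm : ∀ u v, w u v = w v u
  pos : V

/-- A legal move: decrease the weight of an edge incident with the piece to a
strictly smaller value and move the piece along it; all other weights stay. -/
def NimMove {V : Type} (p q : NimPos V) : Prop :=
  p.pos ≠ q.pos ∧
  q.w p.pos q.pos < p.w p.pos q.pos ∧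
  ∀ u v, ¬((u = p.pos ∧ v = q.pos) ∨ (u = q.pos ∧ v = p.pos)) → q.w u v = p.w u v

/-- The player to move loses (the position is a 0-position): the opponent has
a winning strategy `f` answering every move. -/
inductive MoverLoses {V : Type} : NimPos V → Prop
  | intro (p : NimPos V) (f : ∀ q, NimMove p q → NimPos V)
      (hmove : ∀ q (h : NimMove p q), NimMove q (f q h))
      (hwin : ∀ q (h : NimMove p q), MoverLoses (f q h)) : MoverLoses p

/-- The player to move wins (the position is a p-position). -/
def MoverWins {V : Type} (p : NimPos V) : Prop :=
  ∃ q, NimMove p q ∧ MoverLoses q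

/-- Weights of the path on vertices `0,…,n` of `Fin (n+1)`: edge `i — i+1` has weight `ω i`. -/
def pathW (n : ℕ) (ω : ℕ → ℕ) (u v : Fin (n+1)) : ℕ :=
  if u.val + 1 = v.val then ω u.val
  else if v.val + 1 = u.val then ω v.val else 0

theorem pathW_symm (n : ℕ) (ω : ℕ → ℕ) : ∀ u v, pathW n ω u v = pathW n ω v u := by
  intro u v; unfold pathW; split_ifs <;> first | rfl | (exfalso; omega)

/-- Weights of the cycle on `Fin m` (`m ≥ 3`): edge `i — (i+1) % m` has weight `ω i`. -/
def cycW (m : ℕ) (ω : ℕ → ℕ) (u v : Fin m) : ℕ :=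
  (if (u.val + 1) % m = v.val then ω u.val else 0) +
  (if (v.val + 1) % m = u.val then ω v.val else 0)

theorem cycW_symm (m : ℕ) (ω : ℕ → ℕ) : ∀ u v, cycW m ω u v = cycW m ω v u :=
  fun _ _ => Nat.add_comm _ _

/-- Weight-1 complete bipartite graph `K_{2,j}`: part `{0,1}` and part `{2,…,j+1}`. -/
def k2W (j : ℕ) (u v : Fin (j+2)) : ℕ :=
  if (u.val < 2 ∧ 2 ≤ v.val) ∨ (v.val < 2 ∧ 2 ≤ u.val) then 1 else 0

theorem k2W_symm (j : ℕ) : ∀ u v, k2W j u v = k2W j v u := by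
  intro u v; unfold k2W; split_ifs <;> omega

/-- Weight-1 `SSB_j = K_{2,j} + e_{12}`: `K_{2,j}` plus the edge `0 — 1`. -/
def ssbW (j : ℕ) (u v : Fin (j+2)) : ℕ :=
  if ((u.val < 2 ∧ 2 ≤ v.val) ∨ (v.val < 2 ∧ 2 ≤ u.val)) ∨
      (u.val < 2 ∧ v.val < 2 ∧ u.val ≠ v.val) then 1 else 0

theorem ssbW_symm (j : ℕ) : ∀ u v, ssbW j u v = ssbW j v u := by
  intro u v; unfold ssbW; split_ifs <;> omega

/-- Weight-1 complete graph `K_n`. -/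
def knW (n : ℕ) (u v : Fin n) : ℕ := if u.val ≠ v.val then 1 else 0

theorem knW_symm (n : ℕ) : ∀ u v, knW n u v = knW n v u := by
  intro u v; unfold knW; split_ifs <;> omega

/-- Length of the maximal all-positive run of cycle edges clockwise from vertex `s`. -/
noncomputable def fwdLen (m : ℕ) (w : ℕ → ℕ) (s : ℕ) : ℕ :=
  sSup {d | d ≤ m ∧ ∀ i < d, 0 < w ((s + i) % m)}

/-- Length of the maximal all-positive run of cycle edges counterclockwise from vertex `s`. -/
noncomputable def bwdLen (m : ℕ) (w : ℕ → ℕ) (s : ℕ) : ℕ :=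
  sSup {d | d ≤ m ∧ ∀ i < d, 0 < w ((s + m - 1 - i) % m)}

/-
A vertex `a` and a non-adjacent vertex `b` with the same weights to all other vertices are
false twins. If the token sits on `a`, the second player mirrors: whenever the mover lowers
`a — y` to `k`, answer by lowering `y — b` to `k`. The token is then on `b`, and `a`, `b`
are again false twins. Every move lowers the total weight, so the mover eventually gets
stuck. In `K_n` any two vertices `s ≠ t` have the same neighbours apart from each other, so
the first player deletes `s — t`, which leaves the token on `t` with `s` as its false twin.
-/

namespace NimPos

variable {V : Type}

def moveTo [DecidableEq V] (p : NimPos V) (v : V) (k : ℕ) : NimPos V where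
  w x y := if s(x, y) = s(p.pos, v) then k else p.w x y
  symm x y := by simp only [Sym2.eq_swap, p.symm x y]
  pos := v

section moveTo

variable [DecidableEq V] (p : NimPos V) (v : V) (k : ℕ)

@[simp] theorem moveTo_pos : (p.moveTo v k).pos = v := rfl

theorem moveTo_w (x y : V) :
    (p.moveTo v k).w x y = if s(x, y) = s(p.pos, v) then k else p.w x y := rfl

theorem moveTo_w_pos : (p.moveTo v k).w p.pos v = k := by simp [moveTo_w]

theorem moveTo_w_of_ne {x y : V} (h : s(x, y) ≠ s(p.pos, v)) : (p.moveTo v k).w x y = p.w x y :=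
  if_neg h

theorem nimMove_moveTo {v : V} {k : ℕ} (hv : p.pos ≠ v) (hk : k < p.w p.pos v) :
    NimMove p (p.moveTo v k) := by
  refine ⟨hv, by rwa [moveTo_pos, moveTo_w_pos], fun x y hxy => p.moveTo_w_of_ne v k ?_⟩
  rwa [Ne, Sym2.eq_iff]

end moveTo

def totalWeight [Fintype V] (p : NimPos V) : ℕ := ∑ x, ∑ y, p.w x y

end NimPos

namespace NimMove

variable {V : Type}

theorem w_le {p q : NimPos V} (h : NimMove p q) (x y : V) : q.w x y ≤ p.w x y := by
  obtain ⟨-, hlt, hrest⟩ := h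
  by_cases hxy : (x = p.pos ∧ y = q.pos) ∨ (x = q.pos ∧ y = p.pos)
  · rcases hxy with ⟨rfl, rfl⟩ | ⟨rfl, rfl⟩
    · exact hlt.le
    · rw [q.symm, p.symm]; exact hlt.le
  · exact (hrest x y hxy).le

theorem totalWeight_lt [Fintype V] {p q : NimPos V} (h : NimMove p q) :
    q.totalWeight < p.totalWeight :=
  Finset.sum_lt_sum (fun x _ => Finset.sum_le_sum fun y _ => h.w_le x y)
    ⟨p.pos, Finset.mem_univ _,
      Finset.sum_lt_sum (fun y _ => h.w_le _ y) ⟨q.pos, Finset.mem_univ _, h.2.1⟩⟩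

end NimMove

namespace NimPos

variable {V : Type}

theorem moverLoses_of_forall_nimMove [Fintype V] (P : NimPos V → Prop)
    (hP : ∀ p, P p → ∀ q, NimMove p q → ∃ r, NimMove q r ∧ P r) :
    ∀ p, P p → MoverLoses p := by
  intro p
  induction h : p.totalWeight using Nat.strong_induction_on generalizing p with
  | _ m ih =>
    intro hp
    choose f hmove hf using hP p hp
    refine MoverLoses.intro p f hmove fun q hq => ih _ ?_ _ rfl (hf q hq)
    exact h ▸ (hmove q hq).totalWeight_lt.trans hq.totalWeight_lt

def IsFalseTwin (p : NimPos V) (a b : V) : Prop :=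
  a ≠ b ∧ p.w a b = 0 ∧ ∀ y, y ≠ a → y ≠ b → p.w a y = p.w b y

theorem IsFalseTwin.exists_nimMove [DecidableEq V] {p q : NimPos V} {b : V}
    (htwin : p.IsFalseTwin p.pos b) (hq : NimMove p q) :
    ∃ r, NimMove q r ∧ r.IsFalseTwin r.pos p.pos := by
  obtain ⟨hab, hab0, hw⟩ := htwin
  obtain ⟨hay, hlt, hrest⟩ := hq
  set a := p.pos
  set y := q.pos
  have hyb : y ≠ b := by rintro hyb; rw [hyb] at hlt; omega
  have hq_ne {x z : V} (h : s(x, z) ≠ s(a, y)) : q.w x z = p.w x z := hrest x z (by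
    rwa [Ne, Sym2.eq_iff] at h)
  have hqb : q.w y b = p.w a y := by
    rw [q.symm, hq_ne (by rw [Ne, Sym2.eq_iff]; grind), hw y (Ne.symm hay) hyb]
  refine ⟨q.moveTo b (q.w a y), q.nimMove_moveTo hyb (hqb ▸ hlt), hab.symm, ?_, fun z hzb hza => ?_⟩
  · rw [moveTo_pos, moveTo_w_of_ne _ _ _ (by rw [Ne, Sym2.eq_iff]; grind),
      hq_ne (by rw [Ne, Sym2.eq_iff]; grind), p.symm, hab0]
  · simp only [moveTo_pos] at hzb ⊢
    rw [moveTo_w_of_ne q b _ (x := a) (y := z) (by rw [Ne, Sym2.eq_iff]; grind)]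
    by_cases hzy : z = y
    · rw [hzy, moveTo_w, if_pos Sym2.eq_swap]
    · rw [moveTo_w_of_ne _ _ _ (by rw [Ne, Sym2.eq_iff]; grind),
        hq_ne (by rw [Ne, Sym2.eq_iff]; grind), hq_ne (by rw [Ne, Sym2.eq_iff]; grind),
        hw z hza hzb]

theorem IsFalseTwin.moverLoses [Fintype V] [DecidableEq V] {p : NimPos V} {b : V}
    (htwin : p.IsFalseTwin p.pos b) : MoverLoses p :=
  moverLoses_of_forall_nimMove (fun p => ∃ b, p.IsFalseTwin p.pos b)
    (fun _ ⟨_, htwin⟩ _ hq => (htwin.exists_nimMove hq).imp fun _ hr => ⟨hr.1, _, hr.2⟩)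
    p ⟨b, htwin⟩

theorem moverWins_of_adjacent_twin [Fintype V] [DecidableEq V] (p : NimPos V) {b : V} (hab : p.pos ≠ b)
    (hpos : 0 < p.w p.pos b) (hw : ∀ y, y ≠ p.pos → y ≠ b → p.w p.pos y = p.w b y) :
    MoverWins p := by
  refine ⟨p.moveTo b 0, p.nimMove_moveTo hab hpos, IsFalseTwin.moverLoses (b := p.pos)
    ⟨hab.symm, ?_, fun y hyb hya => ?_⟩⟩
  · rw [moveTo_pos, moveTo_w, if_pos Sym2.eq_swap]
  · simp only [moveTo_pos] at hyb ⊢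
    rw [moveTo_w_of_ne _ _ _ (by rw [Ne, Sym2.eq_iff]; grind),
      moveTo_w_of_ne _ _ _ (by rw [Ne, Sym2.eq_iff]; grind), hw y hya hyb]

end NimPos

/-- Nim on the complete graph `K_n` (`n > 1`) with all edge
weights 1: the first player wins from any starting vertex. -/
theorem stmt11 (n : ℕ) (hn : 1 < n) (s : Fin n) :
    MoverWins ⟨knW n, knW_symm n, s⟩ := by
  have : Nontrivial (Fin n) := Fin.nontrivial_iff_two_le.mpr hn
  obtain ⟨t, hts⟩ := exists_ne s
  have hne {u v : Fin n} (h : u ≠ v) : knW n u v = 1 := if_pos (Fin.val_ne_of_ne h)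
  refine NimPos.moverWins_of_adjacent_twin _ (b := t) hts.symm ?_ fun y hys hyt => ?_
  · exact (hne hts.symm).ge
  · exact (hne (Ne.symm hys)).trans (hne (Ne.symm hyt)).symm
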